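/- arXiv:2602.11568 — 2 statements merged into one kernel-verified Lean document; each statement's English description precedes it below -/
import Mathlib

section
/- Let (N, P_S) be the Z0/Z1 channel and N^{CSIR} its associated channel with CSIR. Then there exists a classical coding scheme with causal CSIT for (N^{CSIR}, P_S) with message size M = 2 and blocklength n = 2 whose probability of success is at least 7/8; consequently η^{C,ca}_{opt,M=2,n=2}(N^{CSIR}, P_S) ≥ 7/8. -/
open scoped Classical BigOperators
open Finset Filter

noncomputable section

def IsPMF {S : Type*} [Fintype S] (P : S → ℝ) : Prop :=
  (∀ s, 0 ≤ P s) ∧ ∑ s, P s = 1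

def IsChannel {X Y S : Type*} [Fintype Y] (N : Y → X → S → ℝ) : Prop :=
  (∀ y x s, 0 ≤ N y x s) ∧ ∀ x s, ∑ y, N y x s = 1

def IsCondPMF {X S : Type*} [Fintype X] (PXS : X → S → ℝ) : Prop :=
  (∀ x s, 0 ≤ PXS x s) ∧ ∀ s, ∑ x, PXS x s = 1

def prodP {S : Type*} (P : S → ℝ) {n : ℕ} (s : Fin n → S) : ℝ := ∏ i, P (s i)

def prodN {X Y S : Type*} (N : Y → X → S → ℝ) {n : ℕ}
    (y : Fin n → Y) (x : Fin n → X) (s : Fin n → S) : ℝ :=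
  ∏ i, N (y i) (x i) (s i)

/-- NS-assisted coding scheme with causal CSIT: nonnegativity, normalization,
and the conditions C1, C2, C3. -/
def IsNSCa {X Y S : Type*} [Fintype X] [Fintype Y] [Fintype S] (M n : ℕ)
    (Z : (Fin n → X) → Fin M → Fin M → (Fin n → S) → (Fin n → Y) → ℝ) : Prop :=
  (∀ x wh w s y, 0 ≤ Z x wh w s y) ∧
  (∀ w s y, ∑ x, ∑ wh, Z x wh w s y = 1) ∧
  (∀ x w s y y', ∑ wh, Z x wh w s y = ∑ wh, Z x wh w s y') ∧
  (∀ wh w w' s s' y, ∑ x, Z x wh w s y = ∑ x, Z x wh w' s' y) ∧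
  (∀ i : ℕ, 1 ≤ i → i < n →
    ∀ (x : Fin n → X) wh w s s' y, (∀ j : Fin n, (j : ℕ) < i → s j = s' j) →
      ∑ x' ∈ univ.filter (fun x' : Fin n → X => ∀ j : Fin n, (j : ℕ) < i → x' j = x j),
        Z x' wh w s y =
      ∑ x' ∈ univ.filter (fun x' : Fin n → X => ∀ j : Fin n, (j : ℕ) < i → x' j = x j),
        Z x' wh w s' y)

def etaNS {X Y S : Type*} [Fintype X] [Fintype Y] [Fintype S]
    (N : Y → X → S → ℝ) (P : S → ℝ) (M n : ℕ)
    (Z : (Fin n → X) → Fin M → Fin M → (Fin n → S) → (Fin n → Y) → ℝ) : ℝ :=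
  (1 / (M : ℝ)) * ∑ w, ∑ x, ∑ s, ∑ y, prodP P s * prodN N y x s * Z x w w s y

def etaNSOpt {X Y S : Type*} [Fintype X] [Fintype Y] [Fintype S]
    (N : Y → X → S → ℝ) (P : S → ℝ) (M n : ℕ) : ℝ :=
  sSup {e : ℝ | ∃ Z : (Fin n → X) → Fin M → Fin M → (Fin n → S) → (Fin n → Y) → ℝ,
    IsNSCa M n Z ∧ etaNS N P M n Z = e}

/-- The length-`(j+1)` prefix `s^{j+1}` of a state sequence. -/
def prefixS {S : Type*} {n : ℕ} (s : Fin n → S) (j : Fin n) : Fin ((j : ℕ) + 1) → S :=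
  fun k => s ⟨k, Nat.lt_of_le_of_lt (Nat.le_of_lt_succ k.isLt) j.isLt⟩

/-- A classical coding scheme with causal CSIT. -/
structure ClassicalCa (X S Y : Type*) [Fintype X] (M n : ℕ) where
  Q : Type
  fq : Fintype Q
  PQ : Q → ℝ
  E : (j : Fin n) → X → (Fin (j : ℕ) → X) → Fin M → (Fin ((j : ℕ) + 1) → S) → Q → ℝ
  D : Fin M → (Fin n → Y) → Q → ℝ
  PQ_nonneg : ∀ q, 0 ≤ PQ q
  PQ_sum : ∑ q ∈ @Finset.univ Q fq, PQ q = 1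
  E_nonneg : ∀ j xj h w sj q, 0 ≤ E j xj h w sj q
  E_sum : ∀ j h w sj q, ∑ xj, E j xj h w sj q = 1
  D_nonneg : ∀ wh y q, 0 ≤ D wh y q
  D_sum : ∀ y q, ∑ wh, D wh y q = 1

def etaC {X Y S : Type*} [Fintype X] [Fintype Y] [Fintype S]
    (N : Y → X → S → ℝ) (P : S → ℝ) (M n : ℕ) (C : ClassicalCa X S Y M n) : ℝ :=
  (1 / (M : ℝ)) * ∑ w : Fin M, ∑ q ∈ @Finset.univ C.Q C.fq, C.PQ q *
    ∑ x : Fin n → X, ∑ s : Fin n → S, ∑ y : Fin n → Y,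
      prodP P s *
      (∏ j, C.E j (x j) (fun k => x ⟨k, k.isLt.trans j.isLt⟩) w (prefixS s j) q) *
      prodN N y x s * C.D w y q

def etaCOpt {X Y S : Type*} [Fintype X] [Fintype Y] [Fintype S]
    (N : Y → X → S → ℝ) (P : S → ℝ) (M n : ℕ) : ℝ :=
  sSup {e : ℝ | ∃ C : ClassicalCa X S Y M n, etaC N P M n C = e}

/-- Conditional mutual information I(X;Y|S) for the joint distribution
P_{XYS}(x,y,s) = P_S(s) P_{X|S}(x|s) N(y|x,s), in bits. -/
def condMI {X Y S : Type*} [Fintype X] [Fintype Y] [Fintype S]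
    (N : Y → X → S → ℝ) (P : S → ℝ) (PXS : X → S → ℝ) : ℝ :=
  ∑ x, ∑ y, ∑ s,
    (P s * PXS x s * N y x s) *
      Real.logb 2 ((P s * PXS x s * N y x s) * P s /
        ((∑ y', P s * PXS x s * N y' x s) * (∑ x', P s * PXS x' s * N y x' s)))

/-- Transition function of the Z0/Z1 channel (arguments: output, input, state). -/
def NZ (y x s : Bool) : ℝ := if x = s then (if y = x then 1 else 0) else 1 / 2

/-- The uniform state distribution of the Z0/Z1 channel. -/
def PZ (_ : Bool) : ℝ := 1 / 2

/-- The channel with CSIR associated to a channel with state. -/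
def NCSIR {X Y S : Type*} (N : Y → X → S → ℝ) : (Y × S) → X → S → ℝ :=
  fun ys x s => if ys.2 = s then N ys.1 x s else 0

/-!
Send `x_j = w ⊕ s_j`. For `w = 0` the input always equals the state, so the channel is noiseless
and the receiver, who sees the states, observes `y_j = s_j` in both slots; for `w = 1` the input
always differs from the state, so each `y_j` is a fair coin and `y_j ≠ s_j` in some slot with
probability `3/4`. Decoding `0` exactly when `y_j = s_j` in both slots therefore succeeds with
probability `(1 + 3/4) / 2 = 7/8`. For the optimum, success probabilities are bounded (crudely by
`|𝒳|^n`), so the supremum dominates every scheme.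
-/

section Bounds

variable {X Y S : Type*}

lemma IsPMF.prodP_nonneg [Fintype S] {P : S → ℝ} (hP : IsPMF P) {n : ℕ} (s : Fin n → S) :
    0 ≤ prodP P s :=
  Finset.prod_nonneg fun i _ => hP.1 (s i)

lemma IsPMF.sum_prodP [Fintype S] {P : S → ℝ} (hP : IsPMF P) (n : ℕ) :
    ∑ s : Fin n → S, prodP P s = 1 := by
  simp only [prodP, ← Fintype.prod_sum (fun (_ : Fin n) (a : S) => P a), hP.2, prod_const_one]

lemma IsChannel.prodN_nonneg [Fintype Y] {N : Y → X → S → ℝ} (hN : IsChannel N) {n : ℕ}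
    (y : Fin n → Y) (x : Fin n → X) (s : Fin n → S) : 0 ≤ prodN N y x s :=
  Finset.prod_nonneg fun i _ => hN.1 (y i) (x i) (s i)

lemma IsChannel.sum_prodN [Fintype Y] {N : Y → X → S → ℝ} (hN : IsChannel N) {n : ℕ}
    (x : Fin n → X) (s : Fin n → S) : ∑ y, prodN N y x s = 1 := by
  simp only [prodN, ← Fintype.prod_sum (fun (i : Fin n) (b : Y) => N b (x i) (s i)), hN.2,
    prod_const_one]

lemma IsChannel.csir [Fintype Y] [Fintype S] {N : Y → X → S → ℝ} (hN : IsChannel N) :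
    IsChannel (NCSIR N) := by
  refine ⟨fun ys x s => ?_, fun x s => ?_⟩
  · unfold NCSIR
    split_ifs
    exacts [hN.1 _ x s, le_rfl]
  · simp [NCSIR, Fintype.sum_prod_type, hN.2 x s]

namespace ClassicalCa

variable [Fintype X] {M n : ℕ} (C : ClassicalCa X S Y M n)

lemma E_le_one (j : Fin n) (xj : X) (h : Fin j → X) (w : Fin M) (sj : Fin (j + 1) → S)
    (q : C.Q) :
    C.E j xj h w sj q ≤ 1 :=
  (Finset.single_le_sum (fun a _ => C.E_nonneg j a h w sj q) (mem_univ xj)).trans_eq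
    (C.E_sum j h w sj q)

lemma D_le_one (wh : Fin M) (y : Fin n → Y) (q : C.Q) : C.D wh y q ≤ 1 :=
  (Finset.single_le_sum (fun a _ => C.D_nonneg a y q) (mem_univ wh)).trans_eq (C.D_sum y q)

lemma prod_E_mul_D_le_one (w : Fin M) (q : C.Q) (x : Fin n → X) (s : Fin n → S)
    (y : Fin n → Y) :
    (∏ j, C.E j (x j) (fun k => x ⟨k, k.isLt.trans j.isLt⟩) w (prefixS s j) q) * C.D w y q ≤ 1 :=
  mul_le_one₀ (prod_le_one (fun _ _ => C.E_nonneg _ _ _ _ _ _) fun _ _ => C.E_le_one _ _ _ _ _ _)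
    (C.D_nonneg w y q) (C.D_le_one w y q)

end ClassicalCa

lemma etaC_le_card_pow [Fintype X] [Fintype Y] [Fintype S] {N : Y → X → S → ℝ} {P : S → ℝ}
    (hN : IsChannel N) (hP : IsPMF P) {M n : ℕ} (C : ClassicalCa X S Y M n) :
    etaC N P M n C ≤ (Fintype.card X : ℝ) ^ n := by
  let := C.fq
  set K : ℝ := (Fintype.card X : ℝ) ^ n
  have hterm : ∀ w q x s y, prodP P s *
      (∏ j, C.E j (x j) (fun k => x ⟨k, k.isLt.trans j.isLt⟩) w (prefixS s j) q) *
      prodN N y x s * C.D w y q ≤ prodP P s * prodN N y x s := by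
    intro w q x s y
    calc _ = prodP P s * prodN N y x s *
          ((∏ j, C.E j (x j) (fun k => x ⟨k, k.isLt.trans j.isLt⟩) w (prefixS s j) q) *
            C.D w y q) := by ring
      _ ≤ prodP P s * prodN N y x s :=
          mul_le_of_le_one_right (mul_nonneg (hP.prodP_nonneg s) (hN.prodN_nonneg y x s))
            (C.prod_E_mul_D_le_one w q x s y)
  have hinner : ∀ w q, ∑ x : Fin n → X, ∑ s : Fin n → S, ∑ y : Fin n → Y, prodP P s *
      (∏ j, C.E j (x j) (fun k => x ⟨k, k.isLt.trans j.isLt⟩) w (prefixS s j) q) *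
      prodN N y x s * C.D w y q ≤ K := by
    intro w q
    calc _ ≤ ∑ x : Fin n → X, ∑ s : Fin n → S, ∑ y : Fin n → Y, prodP P s * prodN N y x s :=
          sum_le_sum fun x _ => sum_le_sum fun s _ => sum_le_sum fun y _ =>
            hterm w q x s y
      _ = K := by simp [← mul_sum, hN.sum_prodN, hP.sum_prodP, K]
  have hmsg : ∀ w, ∑ q, C.PQ q *
      ∑ x : Fin n → X, ∑ s : Fin n → S, ∑ y : Fin n → Y, prodP P s *
        (∏ j, C.E j (x j) (fun k => x ⟨k, k.isLt.trans j.isLt⟩) w (prefixS s j) q) *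
        prodN N y x s * C.D w y q ≤ K := by
    intro w
    calc _ ≤ ∑ q, C.PQ q * K := by
          gcongr with q _
          · exact C.PQ_nonneg q
          · exact hinner w q
      _ = K := by rw [← sum_mul, C.PQ_sum, one_mul]
  calc etaC N P M n C ≤ 1 / (M : ℝ) * ∑ _w : Fin M, K := by
        unfold etaC
        gcongr with w _
        exact hmsg w
    _ ≤ K := by
        rcases M.eq_zero_or_pos with rfl | hM
        · simp [K]
        · simp [hM.ne']

lemma etaC_le_etaCOpt [Fintype X] [Fintype Y] [Fintype S] {N : Y → X → S → ℝ} {P : S → ℝ}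
    (hN : IsChannel N) (hP : IsPMF P) {M n : ℕ} (C : ClassicalCa X S Y M n) :
    etaC N P M n C ≤ etaCOpt N P M n :=
  le_csSup ⟨_, by rintro e ⟨C', rfl⟩; exact etaC_le_card_pow hN hP C'⟩ ⟨C, rfl⟩

end Bounds

lemma isChannel_NZ : IsChannel NZ := by
  refine ⟨fun y x s => ?_, fun x s => ?_⟩ <;> unfold NZ <;> split_ifs <;> norm_num

lemma isPMF_PZ : IsPMF PZ := ⟨fun _ => by norm_num [PZ], by norm_num [PZ]⟩

lemma sum_fin_two_fun {α : Type*} [Fintype α] (f : (Fin 2 → α) → ℝ) :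
    ∑ x : Fin 2 → α, f x = ∑ a : α, ∑ b : α, f ![a, b] := by
  rw [← (finTwoArrowEquiv α).symm.sum_comp]
  simp [finTwoArrowEquiv, Fintype.sum_prod_type]

def xorScheme : ClassicalCa Bool Bool (Bool × Bool) 2 2 where
  Q := Unit
  fq := inferInstance
  PQ := fun _ => 1
  E := fun j xj _ w sj _ => if xj = xor (decide (w = 1)) (sj (Fin.last j)) then 1 else 0
  D := fun wh y _ =>
    if wh = (if (y 0).1 = (y 0).2 ∧ (y 1).1 = (y 1).2 then 0 else 1) then 1 else 0
  PQ_nonneg := fun _ => zero_le_one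
  PQ_sum := by simp
  E_nonneg := by intro j xj h w sj q; split <;> norm_num
  E_sum := by intro j h w sj q; simp
  D_nonneg := by intro wh y q; split_ifs <;> norm_num
  D_sum := by intro y q; simp

lemma etaC_xorScheme : etaC (NCSIR NZ) PZ 2 2 xorScheme = 7 / 8 := by
  rw [etaC]
  simp only [sum_fin_two_fun]
  simp [xorScheme, prodP, prodN, prefixS, NZ, NCSIR, PZ, Fin.sum_univ_two, Fin.prod_univ_two,
    Fintype.sum_prod_type]
  rw [show (@Finset.univ Unit xorScheme.fq).card = 1 from rfl]
  norm_num

/-- For the Z0/Z1 channel with CSIR there is a classical causal-CSIT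
scheme with `M = 2`, `n = 2` whose success probability is at least `7/8`; consequently
`η^{C,ca}_opt(N^CSIR, P_S) ≥ 7/8`. -/
theorem z0z1_csir_classical_scheme :
    (∃ C : ClassicalCa Bool Bool (Bool × Bool) 2 2, 7 / 8 ≤ etaC (NCSIR NZ) PZ 2 2 C) ∧
    etaCOpt (NCSIR NZ) PZ 2 2 ≥ 7 / 8 :=
  ⟨⟨xorScheme, etaC_xorScheme.ge⟩,
    etaC_xorScheme ▸ etaC_le_etaCOpt isChannel_NZ.csir isPMF_PZ xorScheme⟩
end
end

section
/- Every classical causal-CSIT coding scheme induces an NS-assisted causal-CSIT scheme with the same probability of success: let (N, P_S) be a channel with state and M, n ∈ ℕ. Given a classical coding scheme with causal CSIT (𝒬, P_Q, E, D) with message size M and blocklength n, define Z(x^n, ŵ | w, s^n, y^n) = Σ_{q∈𝒬} P_Q(q) (∏_{j=1}^n E(x_j | x^{j−1}, w, s^j, q)) D(ŵ | y^n, q). Then Z is a valid NS-assisted coding scheme with causal CSIT (Z ≥ 0, normalized, and satisfying conditions C1, C2 and C3), and η(Z) equals the probability of success of the classical scheme. Consequently, η^{NS,ca}_{opt,M,n}(N,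 P_S) ≥ η^{C,ca}_{opt,M,n}(N, P_S). -/
open scoped Classical BigOperators
open Finset Filter

noncomputable section

/-!
The induced `Z` is a mixture over the common randomness `q` of the encoder law
`∏_j E(x_j | x^{j-1}, w, s^j, q)` times the decoder law `D(ŵ | y^n, q)`. Summing over `ŵ`
removes the decoder, so the input marginal does not see `y^n` (C1). A causal product of
conditional laws is a law on `𝒳^n`, so summing over `x^n` removes the encoders and the output
marginal does not see `(w, s^n)` (C2); summing only over the inputs after time `i` leaves
`∏_{j ≤ i} E(x_j | x^{j-1}, w, s^j, q)`, which involves the states only up to time `i` (C3).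
The success probabilities agree after exchanging the order of summation. Hence every classical
success probability is an NS one, and the NS success probabilities are bounded above because
`0 ≤ Z ≤ 1`, which compares the suprema.
-/

open Function

section CausalProduct

variable {X : Type*} {n : ℕ}

/-- `causalFactor f j x` is the factor `f_j(x_j | x^{j-1})` of a causally generated sequence. -/
def causalFactor (f : (j : Fin n) → X → (Fin j → X) → ℝ) (j : Fin n) (x : Fin n → X) : ℝ :=
  f j (x j) (fun k => x ⟨k, k.isLt.trans j.isLt⟩)

lemma causalFactor_congr (f : (j : Fin n) → X → (Fin j → X) → ℝ) {j : Fin n}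
    {x x' : Fin n → X} (h : ∀ k : Fin n, k ≤ j → x k = x' k) :
    causalFactor f j x = causalFactor f j x' := by
  unfold causalFactor
  rw [h j le_rfl]
  congr 1
  funext k
  exact h _ (Fin.mk_le_mk.mpr k.isLt.le)

variable [Fintype X]

/-- The sequences `x'` with `x'^i = x^i`, as filtered in condition C3. -/
def agreeBelow (i : ℕ) (x : Fin n → X) : Finset (Fin n → X) :=
  univ.filter fun x' => ∀ j : Fin n, (j : ℕ) < i → x' j = x j

lemma agreeBelow_of_le {i : ℕ} (hi : n ≤ i) (x : Fin n → X) : agreeBelow i x = {x} := by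
  ext x'
  simp only [agreeBelow, mem_filter, mem_univ, true_and, mem_singleton, funext_iff]
  exact ⟨fun h j => h j (j.isLt.trans_le hi), fun h j _ => h j⟩

lemma agreeBelow_zero (x : Fin n → X) : agreeBelow 0 x = univ := by
  ext x'
  simp [agreeBelow]

lemma filter_agreeBelow {i : ℕ} (hi : i < n) (x : Fin n → X) (v : X) :
    (agreeBelow i x).filter (fun x' => x' ⟨i, hi⟩ = v)
      = agreeBelow (i + 1) (update x ⟨i, hi⟩ v) := by
  ext x'
  simp only [agreeBelow, mem_filter, mem_univ, true_and]
  constructor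
  · rintro ⟨hlt, rfl⟩ j hj
    rcases (Nat.lt_succ_iff_lt_or_eq.mp hj) with hj | hj
    · rw [update_of_ne (Fin.ne_of_lt hj), hlt j hj]
    · obtain rfl : j = ⟨i, hi⟩ := Fin.ext hj
      rw [update_self]
  · intro h
    refine ⟨fun j hj => ?_, by simpa using h ⟨i, hi⟩ i.lt_succ_self⟩
    simpa [update_of_ne (Fin.ne_of_lt (b := ⟨i, hi⟩) hj)] using h j (Nat.lt_succ_of_lt hj)

lemma filter_lt_succ_eq_insert {i : ℕ} (hi : i < n) :
    univ.filter (fun j : Fin n => (j : ℕ) < i + 1)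
      = insert ⟨i, hi⟩ (univ.filter (fun j : Fin n => (j : ℕ) < i)) := by
  ext j
  simp only [mem_filter, mem_univ, true_and, mem_insert, Fin.ext_iff]
  omega

variable {f : (j : Fin n) → X → (Fin j → X) → ℝ}

lemma sum_prod_causalFactor_update (hf : ∀ j h, ∑ v, f j v h = 1) {i : ℕ} (hi : i < n)
    (x : Fin n → X) :
    ∑ v, ∏ j ∈ univ.filter (fun j : Fin n => (j : ℕ) < i + 1),
        causalFactor f j (update x ⟨i, hi⟩ v)
      = ∏ j ∈ univ.filter (fun j : Fin n => (j : ℕ) < i), causalFactor f j x := by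
  have hnew : ∀ v, causalFactor f ⟨i, hi⟩ (update x ⟨i, hi⟩ v)
      = f ⟨i, hi⟩ v (fun k => x ⟨k, k.isLt.trans hi⟩) := fun v => by
    unfold causalFactor
    rw [update_self]
    congr 1
    funext k
    exact update_of_ne (Fin.ne_of_lt (b := ⟨i, hi⟩) k.isLt) _ _
  have hold : ∀ v, ∀ j ∈ univ.filter (fun j : Fin n => (j : ℕ) < i),
      causalFactor f j (update x ⟨i, hi⟩ v) = causalFactor f j x := fun v j hj =>
    causalFactor_congr f fun k hk =>
      update_of_ne (Fin.ne_of_lt (b := ⟨i, hi⟩) (hk.trans_lt (mem_filter.mp hj).2)) _ _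
  calc ∑ v, ∏ j ∈ univ.filter (fun j : Fin n => (j : ℕ) < i + 1),
        causalFactor f j (update x ⟨i, hi⟩ v)
      = ∑ v, f ⟨i, hi⟩ v (fun k => x ⟨k, k.isLt.trans hi⟩)
          * ∏ j ∈ univ.filter (fun j : Fin n => (j : ℕ) < i), causalFactor f j x :=
        sum_congr rfl fun v _ => by
          rw [filter_lt_succ_eq_insert hi, prod_insert (by simp), hnew, prod_congr rfl (hold v)]
    _ = _ := by rw [← sum_mul, hf, one_mul]

/-- Summing out `x_n, x_{n-1}, …, x_{i+1}` in turn, each last factor sums to one. -/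
theorem sum_agreeBelow_prod_causalFactor (hf : ∀ j h, ∑ v, f j v h = 1) {i : ℕ} (hi : i ≤ n)
    (x : Fin n → X) :
    ∑ x' ∈ agreeBelow i x, ∏ j, causalFactor f j x'
      = ∏ j ∈ univ.filter (fun j : Fin n => (j : ℕ) < i), causalFactor f j x := by
  induction hi using Nat.decreasingInduction generalizing x with
  | self => rw [agreeBelow_of_le le_rfl, sum_singleton, filter_true_of_mem fun j _ => j.isLt]
  | of_succ i hi ih =>
    rw [← sum_fiberwise (agreeBelow i x) (fun x' => x' ⟨i, hi⟩)]
    simp only [filter_agreeBelow hi, ih]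
    exact sum_prod_causalFactor_update hf hi x

theorem sum_prod_causalFactor [Nonempty X] (hf : ∀ j h, ∑ v, f j v h = 1) :
    ∑ x : Fin n → X, ∏ j, causalFactor f j x = 1 := by
  have h := sum_agreeBelow_prod_causalFactor hf (Nat.zero_le n) (Classical.arbitrary _)
  simpa [agreeBelow_zero] using h

end CausalProduct

lemma prefixS_congr {S : Type*} {n : ℕ} {s s' : Fin n → S} {j : Fin n}
    (h : ∀ k : Fin n, k ≤ j → s k = s' k) : prefixS s j = prefixS s' j :=
  funext fun k => h _ (Fin.mk_le_mk.mpr (Nat.le_of_lt_succ k.isLt))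

namespace ClassicalCa

attribute [local instance] ClassicalCa.fq

variable {X Y S : Type*} [Fintype X] {M n : ℕ} (C : ClassicalCa X S Y M n)

def encProb (w : Fin M) (s : Fin n → S) (q : C.Q) (x : Fin n → X) : ℝ :=
  ∏ j, causalFactor (fun j v h => C.E j v h w (prefixS s j) q) j x

def toNS : (Fin n → X) → Fin M → Fin M → (Fin n → S) → (Fin n → Y) → ℝ :=
  fun x wh w s y => ∑ q, C.PQ q * C.encProb w s q x * C.D wh y q

variable {C}

lemma encProb_nonneg (w : Fin M) (s : Fin n → S) (q : C.Q) (x : Fin n → X) :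
    0 ≤ C.encProb w s q x :=
  prod_nonneg fun _ _ => C.E_nonneg _ _ _ _ _ _

lemma sum_encProb [Nonempty X] (w : Fin M) (s : Fin n → S) (q : C.Q) :
    ∑ x, C.encProb w s q x = 1 :=
  sum_prod_causalFactor fun j h => C.E_sum j h w _ q

lemma sum_agreeBelow_encProb_congr {i : ℕ} (hi : i ≤ n) (x : Fin n → X) (w : Fin M)
    {s s' : Fin n → S} (hs : ∀ j : Fin n, (j : ℕ) < i → s j = s' j) (q : C.Q) :
    ∑ x' ∈ agreeBelow i x, C.encProb w s q x'
      = ∑ x' ∈ agreeBelow i x, C.encProb w s' q x' := by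
  simp only [encProb, sum_agreeBelow_prod_causalFactor (fun j h => C.E_sum j h w _ q) hi]
  refine prod_congr rfl fun j hj => ?_
  rw [causalFactor, causalFactor, prefixS_congr fun k hk =>
    hs k (lt_of_le_of_lt (Fin.le_iff_val_le_val.mp hk) (mem_filter.mp hj).2)]

lemma toNS_nonneg (x : Fin n → X) (wh w : Fin M) (s : Fin n → S) (y : Fin n → Y) :
    0 ≤ C.toNS x wh w s y :=
  sum_nonneg fun q _ => mul_nonneg
    (mul_nonneg (C.PQ_nonneg q) (encProb_nonneg w s q x)) (C.D_nonneg _ _ _)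

lemma sum_toNS_decoded (x : Fin n → X) (w : Fin M) (s : Fin n → S) (y : Fin n → Y) :
    ∑ wh, C.toNS x wh w s y = ∑ q, C.PQ q * C.encProb w s q x := by
  simp only [toNS]
  rw [sum_comm]
  simp only [← mul_sum, C.D_sum, mul_one]

lemma sum_toNS_inputs (T : Finset (Fin n → X)) (wh w : Fin M) (s : Fin n → S) (y : Fin n → Y) :
    ∑ x ∈ T, C.toNS x wh w s y = ∑ q, C.PQ q * (∑ x ∈ T, C.encProb w s q x) * C.D wh y q := by
  simp only [toNS]
  rw [sum_comm]
  simp only [mul_sum, sum_mul]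

theorem isNSCa_toNS [Fintype Y] [Fintype S] [Nonempty X] : IsNSCa M n C.toNS := by
  refine ⟨toNS_nonneg, fun w s y => ?_, fun x w s y y' => ?_, fun wh w w' s s' y => ?_,
    fun i _ hin x wh w s s' y hs => ?_⟩
  · simp only [sum_toNS_decoded]
    rw [sum_comm]
    simp only [← mul_sum, sum_encProb, mul_one, C.PQ_sum]
  · rw [sum_toNS_decoded, sum_toNS_decoded]
  · rw [sum_toNS_inputs, sum_toNS_inputs]
    simp only [sum_encProb]
  · change ∑ x' ∈ agreeBelow i x, C.toNS x' wh w s y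
      = ∑ x' ∈ agreeBelow i x, C.toNS x' wh w s' y
    simp only [sum_toNS_inputs, sum_agreeBelow_encProb_congr hin.le x w hs]

theorem etaNS_toNS [Fintype Y] [Fintype S] (N : Y → X → S → ℝ) (P : S → ℝ) :
    etaNS N P M n C.toNS = etaC N P M n C := by
  unfold etaNS etaC toNS encProb causalFactor
  congr 1
  refine sum_congr rfl fun w _ => ?_
  simp only [mul_sum]
  conv_rhs =>
    rw [sum_comm]; arg 2; ext x; rw [sum_comm]; arg 2; ext s; rw [sum_comm]
  refine sum_congr rfl fun x _ => sum_congr rfl fun s _ => sum_congr rfl fun y _ =>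
    sum_congr rfl fun q _ => by ring

end ClassicalCa

section SuccessProbability

variable {X Y S : Type*} [Fintype X] [Fintype Y] [Fintype S] {M n : ℕ}
  {Z : (Fin n → X) → Fin M → Fin M → (Fin n → S) → (Fin n → Y) → ℝ}

lemma IsNSCa.le_one (hZ : IsNSCa M n Z) (x : Fin n → X) (wh w : Fin M) (s : Fin n → S)
    (y : Fin n → Y) : Z x wh w s y ≤ 1 :=
  calc Z x wh w s y ≤ ∑ wh', Z x wh' w s y :=
        single_le_sum (fun wh' _ => hZ.1 x wh' w s y) (mem_univ wh)
    _ ≤ ∑ x', ∑ wh', Z x' wh' w s y :=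
        single_le_sum (f := fun x' => ∑ wh', Z x' wh' w s y)
          (fun x' _ => sum_nonneg fun wh' _ => hZ.1 x' wh' w s y) (mem_univ x)
    _ = 1 := hZ.2.1 w s y

lemma etaNS_le_of_isNSCa (N : Y → X → S → ℝ) (P : S → ℝ) (hZ : IsNSCa M n Z) :
    etaNS N P M n Z
      ≤ 1 / M * ∑ _w : Fin M, ∑ x : Fin n → X, ∑ s, ∑ y, |prodP P s * prodN N y x s| := by
  unfold etaNS
  gcongr with w _ x _ s _ y _
  calc prodP P s * prodN N y x s * Z x w w s y
      ≤ |prodP P s * prodN N y x s| * Z x w w s y :=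
        mul_le_mul_of_nonneg_right (le_abs_self _) (hZ.1 x w w s y)
    _ ≤ |prodP P s * prodN N y x s| :=
        mul_le_of_le_one_right (abs_nonneg _) (hZ.le_one x w w s y)

lemma bddAbove_etaNS (N : Y → X → S → ℝ) (P : S → ℝ) (M n : ℕ) :
    BddAbove {e : ℝ | ∃ Z : (Fin n → X) → Fin M → Fin M → (Fin n → S) → (Fin n → Y) → ℝ,
      IsNSCa M n Z ∧ etaNS N P M n Z = e} :=
  ⟨_, by rintro _ ⟨Z, hZ, rfl⟩; exact etaNS_le_of_isNSCa N P hZ⟩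

end SuccessProbability

theorem classical_to_ns_scheme_general {X Y S : Type*} [Fintype X] [Fintype Y] [Fintype S]
    [Nonempty X]
    (N : Y → X → S → ℝ) (P : S → ℝ)
    (M n : ℕ) (C : ClassicalCa X S Y M n) :
    let Z : (Fin n → X) → Fin M → Fin M → (Fin n → S) → (Fin n → Y) → ℝ :=
      fun x wh w s y => ∑ q ∈ @Finset.univ C.Q C.fq, C.PQ q *
        (∏ j, C.E j (x j) (fun k => x ⟨k, k.isLt.trans j.isLt⟩) w (prefixS s j) q) *
        C.D wh y q
    IsNSCa M n Z ∧ etaNS N P M n Z = etaC N P M n C ∧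
    etaNSOpt N P M n ≥ etaCOpt N P M n :=
  ⟨C.isNSCa_toNS, C.etaNS_toNS N P,
    csSup_le_csSup (bddAbove_etaNS N P M n) ⟨_, C, rfl⟩ fun _ ⟨C', hC'⟩ =>
      ⟨C'.toNS, C'.isNSCa_toNS, hC' ▸ C'.etaNS_toNS N P⟩⟩

/-- Every classical causal-CSIT scheme induces an NS-assisted
causal-CSIT scheme with the same success probability; consequently
`η^{NS,ca}_opt ≥ η^{C,ca}_opt`. -/
theorem classical_to_ns_scheme {X Y S : Type*} [Fintype X] [Fintype Y] [Fintype S]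
    [Nonempty X] [Nonempty Y] [Nonempty S]
    (N : Y → X → S → ℝ) (P : S → ℝ) (hN : IsChannel N) (hP : IsPMF P)
    (M n : ℕ) (C : ClassicalCa X S Y M n) :
    let Z : (Fin n → X) → Fin M → Fin M → (Fin n → S) → (Fin n → Y) → ℝ :=
      fun x wh w s y => ∑ q ∈ @Finset.univ C.Q C.fq, C.PQ q *
        (∏ j, C.E j (x j) (fun k => x ⟨k, k.isLt.trans j.isLt⟩) w (prefixS s j) q) *
        C.D wh y q
    IsNSCa M n Z ∧ etaNS N P M n Z = etaC N P M n C ∧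
    etaNSOpt N P M n ≥ etaCOpt N P M n :=
  classical_to_ns_scheme_general N P M n C

end
end
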